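/- arXiv:2010.08673 — 2 statements merged into one kernel-verified Lean document; each statement's English description precedes it below -/
import Mathlib

section
/- Let 𝕏 ∈ ℝ^{n×a}, 𝕐 ∈ ℝ^{n×b}, and let z ∈ ℝ^n and w ∈ ℝ^n. Assume S_X = 𝕏ᵀ𝕏/n, S_Y = 𝕐ᵀ𝕐/n, the Gram matrix of (𝕏, z) and the Gram matrix of (𝕐, w) are all positive definite. Let r = z − 𝕏(𝕏ᵀ𝕏)^{-1}𝕏ᵀ z and e = w − 𝕐(𝕐ᵀ𝕐)^{-1}𝕐ᵀ w be the least-squares residuals. Then ‖C(𝕐,(𝕏,z))‖_F² = ‖C(𝕐,𝕏)‖_F² + ‖C(𝕐,r)‖_F², and ‖C((𝕐,w),𝕏)‖_F² = ‖C(𝕐,𝕏)‖_F² + ‖C(e,𝕏)‖_F². -/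
open Matrix

noncomputable section

/-- Squared Frobenius norm of a real matrix: `‖M‖_F² = tr (M Mᵀ)`. -/
def frobSq {m n : Type*} [Fintype m] [Fintype n] (M : Matrix m n ℝ) : ℝ :=
  Matrix.trace (M * Mᵀ)

/-- Frobenius norm of a real matrix. -/
def frobNorm {m n : Type*} [Fintype m] [Fintype n] (M : Matrix m n ℝ) : ℝ :=
  Real.sqrt (frobSq M)

open scoped ComplexOrder in
/-- The square root of a positive semidefinite matrix, as defined in Mathlib of December 2024
(since removed from Mathlib). -/
def Matrix.PosSemidef.sqrt {𝕜 : Type*} [RCLike 𝕜] {n : Type*} [Fintype n] [DecidableEq n]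
    {A : Matrix n n 𝕜} (hA : A.PosSemidef) : Matrix n n 𝕜 :=
  hA.1.eigenvectorUnitary.1 * diagonal ((↑) ∘ Real.sqrt ∘ hA.1.eigenvalues) *
    (star hA.1.eigenvectorUnitary : Matrix n n 𝕜)

open Classical in
/-- `A^{-1/2}`: the inverse of the unique positive definite square root of a positive
definite matrix `A` (junk value `0` if `A` is not positive definite). -/
def invSqrt {n : Type*} [Fintype n] [DecidableEq n] (A : Matrix n n ℝ) : Matrix n n ℝ :=
  if h : A.PosDef then (h.posSemidef.sqrt)⁻¹ else 0

/-- The sample coherence matrix `C(𝕐,𝕏) = n⁻¹ S_Y^{-1/2} 𝕐ᵀ 𝕏 S_X^{-1/2}`, where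
`S_X = 𝕏ᵀ𝕏/n` and `S_Y = 𝕐ᵀ𝕐/n`. -/
def coh {ν a b : Type*} [Fintype ν] [Fintype a] [Fintype b] [DecidableEq a] [DecidableEq b]
    (N : ℕ) (Y : Matrix ν b ℝ) (X : Matrix ν a ℝ) : Matrix b a ℝ :=
  (N : ℝ)⁻¹ • (invSqrt ((N : ℝ)⁻¹ • (Yᵀ * Y)) * Yᵀ * X * invSqrt ((N : ℝ)⁻¹ • (Xᵀ * X)))

/-- The matrix obtained from `X` by appending the vector `z` as an extra column. -/
def appendCol {ν a : Type*} (X : Matrix ν a ℝ) (z : ν → ℝ) : Matrix ν (a ⊕ Unit) ℝ :=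
  Matrix.of fun i => Sum.elim (X i) fun _ => z i

/-- A vector viewed as a one-column matrix. -/
def colM {ν : Type*} (z : ν → ℝ) : Matrix ν Unit ℝ :=
  Matrix.of fun i _ => z i

/-- The least-squares residual of `z` regressed on the columns of `X`:
`r = z − X (XᵀX)⁻¹ Xᵀ z`. -/
def resid {ν a : Type*} [Fintype ν] [Fintype a] [DecidableEq a]
    (X : Matrix ν a ℝ) (z : ν → ℝ) : ν → ℝ :=
  z - (X * (Xᵀ * X)⁻¹ * Xᵀ).mulVec z

/-!
With `P_X = X (XᵀX)⁻¹ Xᵀ` the hat matrix of `X`, the scalings by `n` and the square roots in the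
coherence matrix cancel and `‖C(Y, X)‖_F² = tr (P_Y P_X)`. Appending `z` to `X` amounts to
appending the residual `r`: `(X, z) = (X, r) T` with `T` block unitriangular, and `P_{W T} = P_W`
for invertible `T`. Since `Xᵀ r = 0`, the Gram matrix of `(X, r)` is block diagonal, so
`P_{(X, z)} = P_X + P_r`; both identities follow by linearity of the trace.
-/

namespace Matrix.PosSemidef

open scoped ComplexOrder

variable {𝕜 : Type*} [RCLike 𝕜] {n : Type*} [Fintype n] [DecidableEq n] {A : Matrix n n 𝕜}

theorem isHermitian_sqrt (hA : A.PosSemidef) : hA.sqrt.IsHermitian := by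
  refine isHermitian_mul_mul_conjTranspose _ ?_
  exact isHermitian_diagonal_of_self_adjoint _ (by ext i; simp)

theorem sqrt_mul_self (hA : A.PosSemidef) : hA.sqrt * hA.sqrt = A := by
  set U : Matrix n n 𝕜 := (hA.1.eigenvectorUnitary : Matrix n n 𝕜)
  have hU : star U * U = 1 := Unitary.coe_star_mul_self hA.1.eigenvectorUnitary
  have hD : diagonal ((↑) ∘ Real.sqrt ∘ hA.1.eigenvalues : n → 𝕜) *
      diagonal ((↑) ∘ Real.sqrt ∘ hA.1.eigenvalues) = diagonal ((↑) ∘ hA.1.eigenvalues) := by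
    rw [diagonal_mul_diagonal]
    congr 1
    ext i
    simp [← RCLike.ofReal_mul, Real.mul_self_sqrt (hA.eigenvalues_nonneg i)]
  calc hA.sqrt * hA.sqrt
      = U * (diagonal ((↑) ∘ Real.sqrt ∘ hA.1.eigenvalues) * (star U * U) *
          diagonal ((↑) ∘ Real.sqrt ∘ hA.1.eigenvalues)) * star U := by
        simp only [sqrt, U, Matrix.mul_assoc]
    _ = A := by
        rw [hU, Matrix.mul_one, hD]
        conv_rhs => rw [hA.1.spectral_theorem, Unitary.conjStarAlgAut_apply]

end Matrix.PosSemidef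

theorem Matrix.PosDef.of_smul {n : Type*} {A : Matrix n n ℝ} {c : ℝ} (h : (c • A).PosDef)
    (hc : 0 < c) : A.PosDef := by
  simpa [smul_smul, hc.ne'] using h.smul (inv_pos.2 hc)

theorem posDef_transpose_mul_self_of_isUnit_det {m n : Type*} [Fintype m] [Fintype n]
    [DecidableEq n] {R : Matrix m n ℝ} (h : IsUnit (Rᵀ * R).det) : (Rᵀ * R).PosDef := by
  have hR := posSemidef_conjTranspose_mul_self R
  rw [conjTranspose_eq_transpose_of_trivial] at hR
  exact hR.posDef_iff_isUnit.2 ((isUnit_iff_isUnit_det _).2 h)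

theorem nonempty_of_posDef_transpose_mul_self {m n : Type*} [Fintype m] [Fintype n] [DecidableEq n]
    [Nonempty n] {W : Matrix m n ℝ} (h : (Wᵀ * W).PosDef) : Nonempty m := by
  by_contra hm
  rw [not_nonempty_iff] at hm
  have hW : Wᵀ * W = 0 := by
    ext i j
    simp [mul_apply]
  exact h.det_pos.ne' (by rw [hW, det_zero])

section invSqrt

variable {n : Type*} [Fintype n] [DecidableEq n]

theorem invSqrt_transpose (A : Matrix n n ℝ) : (invSqrt A)ᵀ = invSqrt A := by
  unfold invSqrt
  split_ifs with hA
  · rw [transpose_nonsing_inv, ← conjTranspose_eq_transpose_of_trivial,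
      hA.posSemidef.isHermitian_sqrt.eq]
  · exact transpose_zero

theorem invSqrt_mul_self {A : Matrix n n ℝ} (hA : A.PosDef) : invSqrt A * invSqrt A = A⁻¹ := by
  rw [invSqrt, dif_pos hA, ← Matrix.mul_inv_rev, hA.posSemidef.sqrt_mul_self]

theorem Matrix.inv_smul_of_ne_zero {K : Type*} [Field K] {A : Matrix n n K} {c : K} (hc : c ≠ 0)
    (hA : IsUnit A.det) : (c • A)⁻¹ = c⁻¹ • A⁻¹ :=
  inv_eq_left_inv (by simp [smul_smul, hc, nonsing_inv_mul _ hA])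

theorem invSqrt_smul_mul_self {G : Matrix n n ℝ} (hG : G.PosDef) {c : ℝ} (hc : 0 < c) :
    invSqrt (c • G) * invSqrt (c • G) = c⁻¹ • G⁻¹ := by
  rw [invSqrt_mul_self (hG.smul hc), inv_smul_of_ne_zero hc.ne' hG.det_pos.ne'.isUnit]

end invSqrt

section frobSq

variable {m k : Type*} [Fintype m] [Fintype k]

theorem frobSq_smul (c : ℝ) (M : Matrix m k ℝ) : frobSq (c • M) = c ^ 2 * frobSq M := by
  rw [frobSq, frobSq, transpose_smul, Matrix.smul_mul, Matrix.mul_smul, smul_smul, trace_smul,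
    smul_eq_mul, sq]

theorem frobSq_mul_mul (A : Matrix m m ℝ) (M : Matrix m k ℝ) (B : Matrix k k ℝ) :
    frobSq (A * M * B) = trace (Aᵀ * A * M * (B * Bᵀ) * Mᵀ) := by
  calc trace (A * M * B * (A * M * B)ᵀ) = trace (A * M * B * Bᵀ * Mᵀ * Aᵀ) := by
        simp only [transpose_mul, Matrix.mul_assoc]
    _ = trace (Aᵀ * (A * M * B * Bᵀ * Mᵀ)) := trace_mul_comm _ _
    _ = _ := by simp only [Matrix.mul_assoc]

end frobSq

def hatMatrix {ν a K : Type*} [Fintype ν] [Fintype a] [DecidableEq a] [Field K]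
    (X : Matrix ν a K) : Matrix ν ν K :=
  X * (Xᵀ * X)⁻¹ * Xᵀ

section hatMatrix

variable {ν k a c K : Type*} [Fintype ν] [Fintype k] [DecidableEq k] [Fintype a] [DecidableEq a]
  [Fintype c] [DecidableEq c] [Field K]

omit [DecidableEq k] in
theorem gram_mul (W : Matrix ν k K) (T : Matrix k k K) :
    (W * T)ᵀ * (W * T) = Tᵀ * (Wᵀ * W) * T := by
  simp only [transpose_mul, Matrix.mul_assoc]

omit [Fintype a] [DecidableEq a] [Fintype c] [DecidableEq c] in
theorem gram_fromCols_of_transpose_mul_eq_zero {X : Matrix ν a K} {R : Matrix ν c K}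
    (hXR : Xᵀ * R = 0) : (fromCols X R)ᵀ * fromCols X R = fromBlocks (Xᵀ * X) 0 0 (Rᵀ * R) := by
  have hRX : Rᵀ * X = 0 := by rw [← transpose_transpose X, ← transpose_mul, hXR, transpose_zero]
  rw [transpose_fromCols, fromRows_mul_fromCols, hXR, hRX]

theorem hatMatrix_mul_of_isUnit_det (W : Matrix ν k K) {T : Matrix k k K} (hT : IsUnit T.det) :
    hatMatrix (W * T) = hatMatrix W := by
  have hTt : IsUnit Tᵀ.det := by rwa [det_transpose]
  calc hatMatrix (W * T) = W * (T * (T⁻¹ * ((Wᵀ * W)⁻¹ * (Tᵀ⁻¹ * (Tᵀ * Wᵀ))))) := by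
        rw [hatMatrix, gram_mul, Matrix.mul_inv_rev, Matrix.mul_inv_rev, transpose_mul]
        simp only [Matrix.mul_assoc]
    _ = hatMatrix W := by
        rw [Matrix.nonsing_inv_mul_cancel_left (A := Tᵀ) _ hTt,
          Matrix.mul_nonsing_inv_cancel_left (A := T) _ hT, hatMatrix, Matrix.mul_assoc]

theorem hatMatrix_fromCols_of_transpose_mul_eq_zero {X : Matrix ν a K} {R : Matrix ν c K}
    (hXR : Xᵀ * R = 0) (hX : IsUnit (Xᵀ * X).det) (hR : IsUnit (Rᵀ * R).det) :
    hatMatrix (fromCols X R) = hatMatrix X + hatMatrix R := by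
  rw [hatMatrix, gram_fromCols_of_transpose_mul_eq_zero hXR,
    inv_fromBlocks_zero₂₁_of_isUnit_iff _ _ _
      (iff_of_true ((isUnit_iff_isUnit_det _).2 hX) ((isUnit_iff_isUnit_det _).2 hR))]
  simp [transpose_fromCols, fromCols_mul_fromBlocks, fromCols_mul_fromRows, hatMatrix]

end hatMatrix

theorem frobSq_coh_eq_trace_hatMatrix {ν a b : Type*} [Fintype ν] [Fintype a] [Fintype b]
    [DecidableEq a] [DecidableEq b] {N : ℕ} (hN : N ≠ 0) {Y : Matrix ν b ℝ} {X : Matrix ν a ℝ}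
    (hY : (Yᵀ * Y).PosDef) (hX : (Xᵀ * X).PosDef) :
    frobSq (coh N Y X) = trace (hatMatrix Y * hatMatrix X) := by
  have hc : 0 < (N : ℝ)⁻¹ := by positivity
  have hcyc : trace ((Yᵀ * Y)⁻¹ * (Yᵀ * X) * (Xᵀ * X)⁻¹ * (Yᵀ * X)ᵀ) =
      trace (hatMatrix Y * hatMatrix X) := by
    calc _ = trace ((Yᵀ * Y)⁻¹ * Yᵀ * X * (Xᵀ * X)⁻¹ * Xᵀ * Y) := by
          simp only [transpose_mul, transpose_transpose, Matrix.mul_assoc]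
      _ = trace (Y * ((Yᵀ * Y)⁻¹ * Yᵀ * X * (Xᵀ * X)⁻¹ * Xᵀ)) := trace_mul_comm _ _
      _ = _ := by simp only [hatMatrix, Matrix.mul_assoc]
  rw [coh, Matrix.mul_assoc _ Yᵀ X, frobSq_smul, frobSq_mul_mul, invSqrt_transpose,
    invSqrt_transpose, invSqrt_smul_mul_self hY hc, invSqrt_smul_mul_self hX hc]
  simp only [Matrix.smul_mul, Matrix.mul_smul, smul_smul, trace_smul, smul_eq_mul, hcyc]
  field_simp

section resid

theorem appendCol_eq_fromCols {ν a : Type*} (X : Matrix ν a ℝ) (z : ν → ℝ) :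
    appendCol X z = fromCols X (colM z) := by
  ext i (j | j) <;> rfl

variable {ν a : Type*} [Fintype ν] [Fintype a] [DecidableEq a]

theorem colM_resid (X : Matrix ν a ℝ) (z : ν → ℝ) :
    colM (resid X z) = colM z - hatMatrix X * colM z := by
  ext i j
  simp [colM, resid, hatMatrix, mulVec, mul_apply, dotProduct]

theorem transpose_mul_colM_resid {X : Matrix ν a ℝ} (hX : IsUnit (Xᵀ * X).det) (z : ν → ℝ) :
    Xᵀ * colM (resid X z) = 0 := by
  rw [colM_resid, Matrix.mul_sub, hatMatrix, Matrix.mul_assoc, Matrix.mul_assoc,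
    ← Matrix.mul_assoc Xᵀ, Matrix.mul_nonsing_inv_cancel_left (A := Xᵀ * X) _ hX, sub_self]

theorem appendCol_eq_fromCols_resid_mul (X : Matrix ν a ℝ) (z : ν → ℝ) :
    appendCol X z =
      fromCols X (colM (resid X z)) *
        (fromBlocks 1 ((Xᵀ * X)⁻¹ * Xᵀ * colM z) 0 1 : Matrix (a ⊕ Unit) (a ⊕ Unit) ℝ) := by
  rw [appendCol_eq_fromCols, fromCols_mul_fromBlocks, colM_resid, hatMatrix]
  simp [Matrix.mul_assoc]

theorem isUnit_det_gram_colM_resid {X : Matrix ν a ℝ} (hX : IsUnit (Xᵀ * X).det) {z : ν → ℝ}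
    (hG : IsUnit ((appendCol X z)ᵀ * appendCol X z).det) :
    IsUnit ((colM (resid X z))ᵀ * colM (resid X z)).det := by
  rw [appendCol_eq_fromCols_resid_mul, gram_mul,
    gram_fromCols_of_transpose_mul_eq_zero (transpose_mul_colM_resid hX z), det_mul, det_mul,
    det_fromBlocks_zero₂₁] at hG
  exact isUnit_of_mul_isUnit_right (isUnit_of_mul_isUnit_right (isUnit_of_mul_isUnit_left hG))

theorem hatMatrix_appendCol {X : Matrix ν a ℝ} (hX : IsUnit (Xᵀ * X).det) {z : ν → ℝ}
    (hG : IsUnit ((appendCol X z)ᵀ * appendCol X z).det) :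
    hatMatrix (appendCol X z) = hatMatrix X + hatMatrix (colM (resid X z)) := by
  rw [appendCol_eq_fromCols_resid_mul, hatMatrix_mul_of_isUnit_det _ (by simp),
    hatMatrix_fromCols_of_transpose_mul_eq_zero (transpose_mul_colM_resid hX z) hX
      (isUnit_det_gram_colM_resid hX hG)]

end resid

/-- Increments of the sample Pillai trace `‖C‖_F²` when one variable is appended to one of the
two blocks (equations (15)–(16) of Lemma 1): with residuals `r = z − 𝕏(𝕏ᵀ𝕏)⁻¹𝕏ᵀz` and
`e = w − 𝕐(𝕐ᵀ𝕐)⁻¹𝕐ᵀw`,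
`‖C(𝕐,(𝕏,z))‖_F² = ‖C(𝕐,𝕏)‖_F² + ‖C(𝕐,r)‖_F²` and
`‖C((𝕐,w),𝕏)‖_F² = ‖C(𝕐,𝕏)‖_F² + ‖C(e,𝕏)‖_F²`. -/
theorem pillai_trace_increment_one_block (n a b : ℕ)
    (X : Matrix (Fin n) (Fin a) ℝ) (Y : Matrix (Fin n) (Fin b) ℝ)
    (z : Fin n → ℝ) (w : Fin n → ℝ)
    (hSX : ((n : ℝ)⁻¹ • (Xᵀ * X)).PosDef) (hSY : ((n : ℝ)⁻¹ • (Yᵀ * Y)).PosDef)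
    (hGX : ((appendCol X z)ᵀ * appendCol X z).PosDef)
    (hGY : ((appendCol Y w)ᵀ * appendCol Y w).PosDef) :
    frobSq (coh n Y (appendCol X z)) =
        frobSq (coh n Y X) + frobSq (coh n Y (colM (resid X z))) ∧
      frobSq (coh n (appendCol Y w) X) =
        frobSq (coh n Y X) + frobSq (coh n (colM (resid Y w)) X) := by
  have hn : n ≠ 0 := Fin.pos_iff_nonempty.2 (nonempty_of_posDef_transpose_mul_self hGX) |>.ne'
  have hX := hSX.of_smul (by positivity)
  have hY := hSY.of_smul (by positivity)
  have hXu := hX.det_pos.ne'.isUnit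
  have hYu := hY.det_pos.ne'.isUnit
  have hGXu := hGX.det_pos.ne'.isUnit
  have hGYu := hGY.det_pos.ne'.isUnit
  have hR := posDef_transpose_mul_self_of_isUnit_det (isUnit_det_gram_colM_resid hXu hGXu)
  have hE := posDef_transpose_mul_self_of_isUnit_det (isUnit_det_gram_colM_resid hYu hGYu)
  constructor
  · rw [frobSq_coh_eq_trace_hatMatrix hn hY hGX, hatMatrix_appendCol hXu hGXu, Matrix.mul_add,
      trace_add, frobSq_coh_eq_trace_hatMatrix hn hY hX, frobSq_coh_eq_trace_hatMatrix hn hY hR]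
  · rw [frobSq_coh_eq_trace_hatMatrix hn hGY hX, hatMatrix_appendCol hYu hGYu, Matrix.add_mul,
      trace_add, frobSq_coh_eq_trace_hatMatrix hn hY hX, frobSq_coh_eq_trace_hatMatrix hn hE hX]
end
end

section
/- Let Σ ∈ ℝ^{(p+q+1)×(p+q+1)} be a symmetric positive definite matrix partitioned into blocks Σ_X ∈ ℝ^{p×p}, Σ_Y ∈ ℝ^{q×q}, σ_Z ∈ ℝ (a scalar), with cross blocks Σ_XY = Σ_YXᵀ ∈ ℝ^{p×q}, Σ_XZ = Σ_ZXᵀ ∈ ℝ^{p×1}, Σ_YZ = Σ_ZYᵀ ∈ ℝ^{q×1}. Set σ_E = σ_Z − Σ_ZY Σ_Y^{-1} Σ_YZ and Σ_EX = Σ_ZX − Σ_ZY Σ_Y^{-1} Σ_YX ∈ ℝ^{1×p}, and let Σ_W = [[Σ_Y, Σ_YZ],[Σ_ZY, σ_Z]] ∈ ℝ^{(q+1)×(q+1)} and Σ_WX = [[Σ_YX],[Σ_ZX]] ∈ ℝ^{(q+1)×p}. Then σ_E > 0 and tr(Σ_W^{-1} Σ_WX Σ_X^{-1} Σ_WXᵀ)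 = tr(Σ_Y^{-1} Σ_YX Σ_X^{-1} Σ_XY) + σ_E^{-1} Σ_EX Σ_X^{-1} Σ_EXᵀ; in particular tr(Σ_W^{-1} Σ_WX Σ_X^{-1} Σ_WXᵀ) ≥ tr(Σ_Y^{-1} Σ_YX Σ_X^{-1} Σ_XY). -/
/-! Eliminating the `Y`-block of `Σ_W` by its Schur complement `σ_E` writes `Σ_W⁻¹` as
`diag(Σ_Y⁻¹, 0) + v σ_E⁻¹ vᵀ` with `v = (-Σ_Y⁻¹ Σ_YZ, 1)`. Conjugating by `Σ_WX` and cycling the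
trace splits the Pillai trace of `(X, (Y, Z))` into that of `(X, Y)` plus `σ_E⁻¹ Σ_EX Σ_X⁻¹ Σ_EXᵀ`,
since `vᵀ Σ_WX = Σ_EX`. Positivity of `σ_E` comes from `det Σ_W = det Σ_Y · σ_E`. -/

open Matrix

namespace Matrix

variable {l m n α : Type*} [Fintype m] [Fintype n] [DecidableEq m] [DecidableEq n]
  [CommRing α]

theorem inv_fromBlocks₁₁_eq_add (A : Matrix m m α) (B : Matrix m n α) (C : Matrix n m α)
    (D : Matrix n n α) (hA : IsUnit A.det) (hS : IsUnit (D - C * A⁻¹ * B).det) :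
    (fromBlocks A B C D)⁻¹ = fromBlocks A⁻¹ 0 0 0 +
      fromRows (-(A⁻¹ * B)) 1 * (D - C * A⁻¹ * B)⁻¹ * fromCols (-(C * A⁻¹)) 1 := by
  let := A.invertibleOfIsUnitDet hA
  let := (D - C * ⅟A * B).invertibleOfIsUnitDet (by rwa [invOf_eq_nonsing_inv])
  let := fromBlocks₁₁Invertible A B C D
  rw [← invOf_eq_nonsing_inv, invOf_fromBlocks₁₁_eq, fromRows_mul, fromRows_mul_fromCols]
  simp only [invOf_eq_nonsing_inv, fromBlocks_add, Matrix.one_mul, Matrix.mul_one, zero_add,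
    Matrix.neg_mul, Matrix.mul_neg, neg_neg, Matrix.mul_assoc]

theorem transpose_fromRows_mul_inv_fromBlocks_mul_fromRows (A : Matrix m m α) (hAT : Aᵀ = A)
    (B : Matrix m n α) (D : Matrix n n α) (hA : IsUnit A.det)
    (hS : IsUnit (D - Bᵀ * A⁻¹ * B).det) (C : Matrix m l α) (E : Matrix n l α) :
    (fromRows C E)ᵀ * (fromBlocks A B Bᵀ D)⁻¹ * fromRows C E =
      Cᵀ * A⁻¹ * C + (E - Bᵀ * A⁻¹ * C)ᵀ * (D - Bᵀ * A⁻¹ * B)⁻¹ * (E - Bᵀ * A⁻¹ * C) := by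
  have hAinvT : A⁻¹ᵀ = A⁻¹ := by rw [transpose_nonsing_inv, hAT]
  have hrow : fromCols (-(Bᵀ * A⁻¹)) (1 : Matrix n n α) * fromRows C E = E - Bᵀ * A⁻¹ * C := by
    rw [fromCols_mul_fromRows, Matrix.one_mul, Matrix.neg_mul, neg_add_eq_sub]
  have hcol : (fromRows C E)ᵀ * fromRows (-(A⁻¹ * B)) (1 : Matrix n n α) = (E - Bᵀ * A⁻¹ * C)ᵀ := by
    rw [transpose_fromRows, fromCols_mul_fromRows, Matrix.mul_one, transpose_sub, transpose_mul,
      transpose_mul, hAinvT, Matrix.mul_neg, neg_add_eq_sub, transpose_transpose]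
  rw [inv_fromBlocks₁₁_eq_add _ _ _ _ hA hS, Matrix.mul_add, Matrix.add_mul, ← hcol, ← hrow]
  congr 1
  · rw [transpose_fromRows, fromCols_mul_fromBlocks, fromCols_mul_fromRows]
    simp
  · simp only [Matrix.mul_assoc]

theorem trace_mul_mul_mul_transpose {k : Type*} [Fintype k] [Fintype l] (Y : Matrix k k α)
    (X : Matrix k l α) (G : Matrix l l α) : trace (Y * X * G * Xᵀ) = trace (Xᵀ * Y * X * G) := by
  rw [trace_mul_comm, ← Matrix.mul_assoc, ← Matrix.mul_assoc]

theorem trace_inv_fromBlocks_mul_fromRows_mul_mul_transpose [Fintype l] (A : Matrix m m α)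
    (hAT : Aᵀ = A) (B : Matrix m n α) (D : Matrix n n α) (hA : IsUnit A.det)
    (hS : IsUnit (D - Bᵀ * A⁻¹ * B).det) (C : Matrix m l α) (E : Matrix n l α)
    (G : Matrix l l α) :
    trace ((fromBlocks A B Bᵀ D)⁻¹ * fromRows C E * G * (fromRows C E)ᵀ) =
      trace (A⁻¹ * C * G * Cᵀ) +
        trace ((D - Bᵀ * A⁻¹ * B)⁻¹ * (E - Bᵀ * A⁻¹ * C) * G * (E - Bᵀ * A⁻¹ * C)ᵀ) := by
  rw [trace_mul_mul_mul_transpose,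
    transpose_fromRows_mul_inv_fromBlocks_mul_fromRows A hAT B D hA hS, Matrix.add_mul, trace_add,
    ← trace_mul_mul_mul_transpose, ← trace_mul_mul_mul_transpose]

theorem trace_inv_mul_apply_unit {K : Type*} [Field K] (M N : Matrix Unit Unit K) :
    trace (M⁻¹ * N) = (M () ())⁻¹ * N () () := by
  simp [trace, mul_apply]

theorem PosDef.det_sub_transpose_mul_inv_mul_pos {A : Matrix m m ℝ} {B : Matrix m n ℝ}
    {D : Matrix n n ℝ} (h : (fromBlocks A B Bᵀ D).PosDef) : 0 < (D - Bᵀ * A⁻¹ * B).det := by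
  have hA : A.PosDef := h.submatrix Sum.inl_injective
  let := A.invertibleOfIsUnitDet hA.det_pos.ne'.isUnit
  have hdet := h.det_pos
  rw [det_fromBlocks₁₁, invOf_eq_nonsing_inv] at hdet
  exact pos_of_mul_pos_right hdet hA.det_pos.le

end Matrix

/-- Population analogue of Lemma 1: if the joint covariance matrix of `(X, Y, Z)` (with `Z`
scalar) is positive definite, then the residual variance `σ_E = σ_Z − Σ_ZY Σ_Y⁻¹ Σ_YZ` is
positive and the Pillai trace of `(X, (Y, Z))` equals the Pillai trace of `(X, Y)` plus
`σ_E⁻¹ Σ_EX Σ_X⁻¹ Σ_EXᵀ`, where `Σ_EX = Σ_ZX − Σ_ZY Σ_Y⁻¹ Σ_YX`; in particular the Pillai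
trace does not decrease when `Z` is added to the `Y`-block. -/
theorem population_pillai_trace_increment (p q : ℕ)
    (SigX : Matrix (Fin p) (Fin p) ℝ) (SigY : Matrix (Fin q) (Fin q) ℝ)
    (SigXY : Matrix (Fin p) (Fin q) ℝ)
    (SigXZ : Matrix (Fin p) Unit ℝ) (SigYZ : Matrix (Fin q) Unit ℝ) (sZ : ℝ)
    (hpos : (Matrix.fromBlocks (Matrix.fromBlocks SigX SigXY SigXYᵀ SigY)
        (Matrix.fromRows SigXZ SigYZ) (Matrix.fromRows SigXZ SigYZ)ᵀ
        (Matrix.of fun _ _ => sZ)).PosDef) :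
    0 < sZ - (SigYZᵀ * SigY⁻¹ * SigYZ) () () ∧
      Matrix.trace ((Matrix.fromBlocks SigY SigYZ SigYZᵀ (Matrix.of fun _ _ => sZ))⁻¹ *
          Matrix.fromRows SigXYᵀ SigXZᵀ * SigX⁻¹ * (Matrix.fromRows SigXYᵀ SigXZᵀ)ᵀ) =
        Matrix.trace (SigY⁻¹ * SigXYᵀ * SigX⁻¹ * SigXY) +
          (sZ - (SigYZᵀ * SigY⁻¹ * SigYZ) () ())⁻¹ *
            (((SigXZᵀ - SigYZᵀ * SigY⁻¹ * SigXYᵀ) * SigX⁻¹ *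
              (SigXZᵀ - SigYZᵀ * SigY⁻¹ * SigXYᵀ)ᵀ) () ()) ∧
      Matrix.trace (SigY⁻¹ * SigXYᵀ * SigX⁻¹ * SigXY) ≤
        Matrix.trace ((Matrix.fromBlocks SigY SigYZ SigYZᵀ (Matrix.of fun _ _ => sZ))⁻¹ *
          Matrix.fromRows SigXYᵀ SigXZᵀ * SigX⁻¹ * (Matrix.fromRows SigXYᵀ SigXZᵀ)ᵀ) := by
  have hX : SigX.PosDef := hpos.submatrix (Sum.inl_injective.comp Sum.inl_injective)
  have hW : (fromBlocks SigY SigYZ SigYZᵀ (of fun _ _ => sZ)).PosDef := by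
    convert hpos.submatrix (Sum.map_injective.2 ⟨Sum.inr_injective, Function.injective_id⟩)
    ext (i | i) (j | j) <;> rfl
  have hY : SigY.PosDef := hW.submatrix Sum.inl_injective
  have hs : 0 < sZ - (SigYZᵀ * SigY⁻¹ * SigYZ) () () := by
    simpa [det_unique] using hW.det_sub_transpose_mul_inv_mul_pos
  have hpillai := trace_inv_fromBlocks_mul_fromRows_mul_mul_transpose SigY
    ((conjTranspose_eq_transpose_of_trivial SigY).symm.trans hY.isHermitian) SigYZ
    (of fun _ _ => sZ) hY.det_pos.ne'.isUnit (by simpa [det_unique] using hs.ne'.isUnit)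
    SigXYᵀ SigXZᵀ SigX⁻¹
  set R := SigXZᵀ - SigYZᵀ * SigY⁻¹ * SigXYᵀ
  rw [transpose_transpose, Matrix.mul_assoc _ R, Matrix.mul_assoc _ (R * SigX⁻¹),
    trace_inv_mul_apply_unit] at hpillai
  have hquad : 0 ≤ (R * SigX⁻¹ * Rᵀ) () () := by
    simpa using (hX.inv.posSemidef.mul_mul_conjTranspose_same R).diag_nonneg
  exact ⟨hs, hpillai, hpillai ▸ le_add_of_nonneg_right (mul_nonneg (inv_nonneg.2 hs.le) hquad)⟩
end
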